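/- Let f : ℤ₂³ → ℤ be the weight function with f(010) = 4, f(011) = 7, f(100) = 8, f(101) = 2, f(110) = 5, and f(y) = 0 for all other y, and let A u v = f(u + v) be the adjacency matrix of the weighted cubelike graph Cay(ℤ₂³, f). Then perfect state transfer occurs at time π/2 between vertices 000 and 101: the (101, 000) entry of exp(-(i π/2)·A) has absolute value 1. -/

import Mathlib

/-!
The Cayley matrix `A = ∑ y, f y • P y` is a combination of the translation matrices `P y`,
which commute and, in a Boolean group, square to the identity. For an involution `P` one has
`exp (z • P) = cosh z • 1 + sinh z • P`, so `exp (-(iπ/2) • P) = -i • P`, and multiplying these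
factors gives `exp (-(iπ/2) • A) = (-i) ^ (∑ y, f y) • P (∑ y, f y • y)`: a unimodular scalar
times a permutation matrix. Here only the weights on `011` and `110` are odd, and
`011 + 110 = 101`.
-/

open Matrix

open NormedSpace Complex Real

section Involution

variable {𝔸 : Type*} [Ring 𝔸] [Algebra ℂ 𝔸] [TopologicalSpace 𝔸] [IsTopologicalRing 𝔸]
  [ContinuousSMul ℂ 𝔸] [T2Space 𝔸]

theorem exp_smul_eq_cosh_add_sinh_of_mul_self_eq_one {P : 𝔸} (hP : P * P = 1) (z : ℂ) :
    exp (z • P) = cosh z • 1 + sinh z • P := by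
  have hsq (k : ℕ) : P ^ (2 * k) = 1 := by rw [pow_mul, sq, hP, one_pow]
  rw [exp_eq_tsum ℂ]
  refine HasSum.tsum_eq (HasSum.even_add_odd ?_ ?_)
  · convert (hasSum_cosh z).smul_const (1 : 𝔸) using 2 with k
    rw [smul_pow, hsq, smul_smul, div_eq_inv_mul]
  · convert (hasSum_sinh z).smul_const P using 2 with k
    rw [smul_pow, pow_succ P, hsq, one_mul, smul_smul, div_eq_inv_mul]

theorem exp_neg_pi_div_two_I_smul_of_mul_self_eq_one {P : 𝔸} (hP : P * P = 1) :
    exp (-(I * (π / 2)) • P) = -I • P := by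
  rw [exp_smul_eq_cosh_add_sinh_of_mul_self_eq_one hP,
    show -(I * (π / 2)) = ((-(π / 2) : ℝ) : ℂ) * I by push_cast; ring, cosh_mul_I, sinh_mul_I,
    ← ofReal_cos, ← ofReal_sin, Real.cos_neg, Real.sin_neg, Real.cos_pi_div_two,
    Real.sin_pi_div_two]
  simp

end Involution

section Translation

variable {G R : Type*} [DecidableEq G] [Semiring R]

section AddGroup

variable [AddGroup G]

variable (R) in
def translationMatrix (y : G) : Matrix G G R := of fun u v => if u = y + v then 1 else 0

-- In a Boolean group `u - v = u + v`, so this is the adjacency matrix `A u v = f (u + v)`.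
def cayleyMatrix (f : G → R) : Matrix G G R := of fun u v => f (u - v)

theorem translationMatrix_zero : translationMatrix R (0 : G) = 1 := by
  ext u v
  simp [translationMatrix, one_apply]

theorem translationMatrix_apply_add_self (x u : G) : translationMatrix R x (x + u) u = 1 := by
  simp [translationMatrix]

variable [Fintype G]

theorem translationMatrix_add (a b : G) :
    translationMatrix R (a + b) = translationMatrix R a * translationMatrix R b := by
  ext u w
  simp [translationMatrix, mul_apply, add_assoc]

theorem translationMatrix_nsmul (n : ℕ) (a : G) :
    translationMatrix R (n • a) = translationMatrix R a ^ n := by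
  induction n with
  | zero => rw [zero_smul, translationMatrix_zero, pow_zero]
  | succ n ih => rw [succ_nsmul, translationMatrix_add, ih, pow_succ]

theorem cayleyMatrix_eq_sum_smul_translationMatrix (f : G → R) :
    cayleyMatrix f = ∑ y, f y • translationMatrix R y := by
  ext u v
  have hc (c : G) : u = c + v ↔ c = u - v := by rw [eq_sub_iff_add_eq, eq_comm]
  simp [cayleyMatrix, translationMatrix, Matrix.sum_apply, hc]

end AddGroup

variable [AddCommGroup G] [Fintype G]

theorem commute_translationMatrix (a b : G) :
    Commute (translationMatrix R a) (translationMatrix R b) := by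
  rw [Commute, SemiconjBy, ← translationMatrix_add, ← translationMatrix_add, add_comm]

theorem translationMatrix_mul_self [Module (ZMod 2) G] (a : G) :
    translationMatrix R a * translationMatrix R a = 1 := by
  rw [← translationMatrix_add, ZModModule.add_self, translationMatrix_zero]

end Translation

section PerfectStateTransfer

variable {G : Type*} [AddCommGroup G] [Module (ZMod 2) G] [Fintype G] [DecidableEq G]

theorem exp_neg_pi_div_two_I_smul_cayleyMatrix (w : G → ℕ) :
    exp (-(I * (π / 2)) • cayleyMatrix (fun y => (w y : ℂ))) =
      (-I) ^ (∑ y, w y) • translationMatrix ℂ (∑ y, w y • y) := by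
  rw [cayleyMatrix_eq_sum_smul_translationMatrix]
  induction (Finset.univ : Finset G) using Finset.induction_on with
  | empty => simp [translationMatrix_zero]
  | insert a s ha ih =>
    have hP : Commute (translationMatrix ℂ a) (∑ y ∈ s, (w y : ℂ) • translationMatrix ℂ y) :=
      Commute.sum_right _ _ _ fun y _ => (commute_translationMatrix a y).smul_right _
    have hcomm : Commute (-(I * (π / 2)) • (w a : ℂ) • translationMatrix ℂ a)
        (-(I * (π / 2)) • ∑ y ∈ s, (w y : ℂ) • translationMatrix ℂ y) :=
      ((hP.smul_left _).smul_left _).smul_right _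
    have hterm : exp (-(I * (π / 2)) • (w a : ℂ) • translationMatrix ℂ a) =
        (-I) ^ w a • translationMatrix ℂ (w a • a) := by
      rw [smul_comm, Nat.cast_smul_eq_nsmul, Matrix.exp_nsmul,
        exp_neg_pi_div_two_I_smul_of_mul_self_eq_one (translationMatrix_mul_self a), smul_pow,
        translationMatrix_nsmul]
    rw [Finset.sum_insert ha, smul_add, Matrix.exp_add_of_commute _ _ hcomm, hterm, ih,
      Finset.sum_insert ha, Finset.sum_insert ha, translationMatrix_add, smul_mul_smul_comm,
      pow_add]

theorem norm_exp_neg_pi_div_two_I_smul_cayleyMatrix_apply (w : G → ℕ) (u : G) :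
    ‖exp (-(I * (π / 2)) • cayleyMatrix (fun y => (w y : ℂ))) ((∑ y, w y • y) + u) u‖ = 1 := by
  rw [exp_neg_pi_div_two_I_smul_cayleyMatrix, Matrix.smul_apply, translationMatrix_apply_add_self]
  simp

end PerfectStateTransfer

def exampleWeights : (Fin 3 → ZMod 2) → ℕ := fun y =>
  if y = ![0,1,0] then 4 else if y = ![0,1,1] then 7 else if y = ![1,0,0] then 8
  else if y = ![1,0,1] then 2 else if y = ![1,1,0] then 5 else 0

theorem weighted_cubelike_pst_example2
    (f : (Fin 3 → ZMod 2) → ℤ)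
    (hf1 : f ![0,1,0] = 4) (hf2 : f ![0,1,1] = 7) (hf3 : f ![1,0,0] = 8)
    (hf4 : f ![1,0,1] = 2) (hf5 : f ![1,1,0] = 5)
    (hf0 : ∀ y, y ≠ ![0,1,0] → y ≠ ![0,1,1] → y ≠ ![1,0,0] → y ≠ ![1,0,1] →
      y ≠ ![1,1,0] → f y = 0)
    (A : Matrix (Fin 3 → ZMod 2) (Fin 3 → ZMod 2) ℂ)
    (hA : ∀ u v, A u v = (f (u + v) : ℂ)) :
    ‖(NormedSpace.exp ((-(Complex.I * (Real.pi / 2))) • A)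
      ![1,0,1] ![0,0,0])‖ = 1 := by
  have hf (y) : f y = exampleWeights y := by
    unfold exampleWeights
    split_ifs <;> simp_all
  have hA' : A = cayleyMatrix fun y => (exampleWeights y : ℂ) := by
    ext u v
    simp [hA, hf, cayleyMatrix, ZModModule.sub_eq_add]
  have htarget : (![1,0,1] : Fin 3 → ZMod 2) = (∑ y, exampleWeights y • y) + ![0,0,0] := by
    decide
  rw [hA', htarget]
  exact norm_exp_neg_pi_div_two_I_smul_cayleyMatrix_apply _ _
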